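/- With the notation and hypotheses of the rational-solution setup below, the subspace W ⊆ 𝔤((z)) is Lagrangian with respect to the pairing κ̄: W^⊥ = W, where W^⊥ = {u ∈ 𝔤((z)) : κ̄(u,w) = 0 for all w ∈ W}. -/

import Mathlib

open scoped TensorProduct
open Finset

/- We remove two instances that create (non-definitionally-equal) instance diamonds for
`LaurentSeries ℂ`, so that `ℂ((z))` carries its canonical `ℂ`-algebra structure
`HahnSeries.instAlgebra` and the induced `ℂ`-module structure. -/
attribute [-instance] HahnSeries.instModule
attribute [-instance] HahnSeries.powerSeriesAlgebra

noncomputable section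

/-- The field `ℂ((z))` of formal Laurent series. -/
abbrev Kz : Type := LaurentSeries ℂ

/-- The monomial `z^k ∈ ℂ((z))`. -/
def zm (k : ℤ) : Kz := HahnSeries.single k (1 : ℂ)

/-- Extraction of the `k`-th coefficient of a Laurent series, as a `ℂ`-linear map. -/
def coeffL (k : ℤ) : Kz →ₗ[ℂ] ℂ where
  toFun f := f.coeff k
  map_add' f g := by simp
  map_smul' c f := by
    show (c • f).coeff k = c • f.coeff k
    rw [HahnSeries.coeff_smul]

variable (L : Type*) [LieRing L] [LieAlgebra ℂ L]

/-- The `k`-th coefficient of an element of `𝔤((z)) = ℂ((z)) ⊗ 𝔤`, as an element of `𝔤`. -/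
def coeffT (k : ℤ) : (Kz ⊗[ℂ] L) →ₗ[ℂ] L :=
  (TensorProduct.lid ℂ L).toLinearMap ∘ₗ LinearMap.rTensor L (coeffL k)

/-- The subalgebra `𝔤[[z]] ⊆ 𝔤((z))`: elements with vanishing negative coefficients. -/
def gPow : Submodule ℂ (Kz ⊗[ℂ] L) :=
  ⨅ (k : ℤ) (_ : k < 0), LinearMap.ker (coeffT L k)

/-- The residue pairing `κ̄(f,g) = res₀(κ(f,g)dz)` on `𝔤((z))`: the coefficient of `z⁻¹`
in the base-changed Killing form, so that `κ̄(a z^l, b z^k) = κ(a,b)` if `l+k = −1` and `0`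
otherwise. -/
def KB (x y : Kz ⊗[ℂ] L) : ℂ :=
  (((killingForm ℂ L).baseChange Kz) x y).coeff (-1)

variable {L}

/-- The element `f_{k,l} = z^{−k−1} e_l + p_{k,l}(z)` of `𝔤((z))`, where the `𝔤`-valued
polynomial `p_{k,l}` is recorded by its finitely supported family of coefficients
`P k l : ℕ →₀ 𝔤`. -/
def fEl {d : ℕ} (e : Fin d → L) (P : ℕ → Fin d → ℕ →₀ L) (k : ℕ) (l : Fin d) :
    Kz ⊗[ℂ] L :=
  zm (-(k : ℤ) - 1) ⊗ₜ[ℂ] e l + (P k l).sum fun m a => zm (m : ℤ) ⊗ₜ[ℂ] a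

/-- `W ⊆ 𝔤((z))`: the `ℂ`-linear span of the elements `f_{k,l}`. -/
def Wsub {d : ℕ} (e : Fin d → L) (P : ℕ → Fin d → ℕ →₀ L) :
    Submodule ℂ (Kz ⊗[ℂ] L) :=
  Submodule.span ℂ {w | ∃ (k : ℕ) (l : Fin d), w = fEl e P k l}

/-- The polynomial `v(x,y) = Σ_{k=0}^{t} Σ_{l=1}^{d} p_{k,l}(y) ⊗ x^k e_l ∈ (𝔤⊗𝔤)[x,y]`. -/
def vFun {d : ℕ} (t : ℕ) (e : Fin d → L) (P : ℕ → Fin d → ℕ →₀ L) (x y : ℂ) :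
    L ⊗[ℂ] L :=
  ∑ k ∈ range (t + 1), ∑ l : Fin d,
    ((P k l).sum fun m a => y ^ m • a) ⊗ₜ[ℂ] (x ^ k • e l)

/-- The rational r-matrix `r(x,y) = γ/(y−x) + v(x,y)`, where `γ = Σ_l e_l ⊗ e_l`. -/
def rFun {d : ℕ} (t : ℕ) (e : Fin d → L) (P : ℕ → Fin d → ℕ →₀ L) (x y : ℂ) :
    L ⊗[ℂ] L :=
  (y - x)⁻¹ • (∑ l : Fin d, e l ⊗ₜ[ℂ] e l) + vFun t e P x y

/-! The skew-symmetry `r(x,y) = -τ r(y,x)`, read in the coordinates `e_a ⊗ e_b` and with the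
`γ`-parts cancelling, is a polynomial identity in `x, y` valid off the diagonal, hence an identity
of coefficients: `e_a`-coordinate of `p_{k,b,m}` `= -` `e_b`-coordinate of `p_{m,a,k}`. These are
exactly the cross terms of `κ̄(f_{k,l}, f_{k',l'})`, so `W` is isotropic.

Moreover `𝔤((z)) = W + 𝔤[[z]]`: `z^{-k-1} e_l ≡ f_{k,l}` modulo `𝔤[[z]]`, and a Laurent series is
a finite combination of negative powers plus a power series. For `g ∈ 𝔤[[z]]` the pairing
`κ̄(g, f_{k,l})` is the `e_l`-coordinate of the `z^k`-coefficient of `g`, so `𝔤[[z]] ∩ W^⊥ = 0`.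
Writing `u ∈ W^⊥` as `w + g` then forces `g ∈ W^⊥ ∩ 𝔤[[z]] = 0`, so `u ∈ W`.
-/

section Polynomial
open Polynomial

variable {R : Type*} [CommRing R] [IsDomain R] [Infinite R]

theorem coeff_eq_zero_of_sum_mul_pow_eq_zero {c : ℕ → R} {M : ℕ} (x₀ : R)
    (h : ∀ x, x ≠ x₀ → ∑ k ∈ range M, c k * x ^ k = 0) {k : ℕ} (hk : k < M) : c k = 0 := by
  set p : R[X] := ∑ k ∈ range M, C (c k) * X ^ k
  have hp : p = 0 := by
    refine eq_zero_of_infinite_isRoot p ((Set.finite_singleton x₀).infinite_compl.mono ?_)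
    intro x hx
    simpa [p, eval_finsetSum] using h x hx
  simpa [p, finsetSum_coeff, coeff_C_mul, coeff_X_pow, hk] using congrArg (coeff · k) hp

theorem coeff_eq_zero_of_sum_mul_pow_mul_pow_eq_zero {c : ℕ → ℕ → R} {M : ℕ}
    (h : ∀ x y, x ≠ y → ∑ k ∈ range M, ∑ m ∈ range M, c k m * x ^ k * y ^ m = 0)
    {k m : ℕ} (hk : k < M) (hm : m < M) : c k m = 0 := by
  have hx : ∀ x, ∑ k ∈ range M, c k m * x ^ k = 0 := fun x =>
    coeff_eq_zero_of_sum_mul_pow_eq_zero x (fun y hy => by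
      simpa only [Finset.sum_comm (s := range M), ← Finset.sum_mul] using h x y hy.symm) hm
  exact coeff_eq_zero_of_sum_mul_pow_eq_zero 0 (fun x _ => hx x) hk

end Polynomial

theorem zm_coeff (i n : ℤ) : (zm i).coeff n = if n = i then 1 else 0 := by
  simp [zm, HahnSeries.coeff_single]

theorem coeff_mul_zm (f : Kz) (j n : ℤ) : (f * zm j).coeff n = f.coeff (n - j) := by
  simpa [zm] using HahnSeries.coeff_mul_single_add (x := f) (a := n - j) (b := j) (r := (1 : ℂ))

theorem Kz.submodule_eq_top_of_zm_mem {S : Submodule ℂ Kz} (hneg : ∀ n < 0, zm n ∈ S)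
    (hpos : ∀ f : Kz, (∀ n < 0, f.coeff n = 0) → f ∈ S) : S = ⊤ := by
  have key : ∀ N : ℕ, ∀ f : Kz, (∀ n < -(N : ℤ), f.coeff n = 0) → f ∈ S := by
    intro N
    induction N with
    | zero => simpa using hpos
    | succ N ih =>
      intro f hf
      set c := f.coeff (-N - 1)
      have hrest : f - c • zm (-N - 1) ∈ S := ih _ fun n hn => by
        rw [HahnSeries.coeff_sub, HahnSeries.coeff_smul, zm_coeff]
        by_cases hnN : n = -N - 1
        · simp [c, hnN]
        · simp [hnN, hf n (by omega)]
      simpa using S.add_mem hrest (S.smul_mem c (hneg (-N - 1) (by omega)))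
  refine Submodule.eq_top_iff'.2 fun f =>
    key (-f.order).toNat f fun n hn => HahnSeries.coeff_eq_zero_of_lt_order ?_
  omega

-- With `HahnSeries.instModule` removed these are not found, but `restrictScalars₁₂` needs them.
instance : IsScalarTower ℂ Kz Kz :=
  ⟨fun c x y => by simp only [smul_eq_mul, ← HahnSeries.single_zero_mul_eq_smul, mul_assoc]⟩

instance : SMulCommClass ℂ Kz Kz :=
  ⟨fun c x y => by simp only [smul_eq_mul, ← HahnSeries.single_zero_mul_eq_smul]; ring⟩

section Coefficients

@[simp]
theorem coeffT_tmul (n : ℤ) (f : Kz) (a : L) : coeffT L n (f ⊗ₜ[ℂ] a) = f.coeff n • a := rfl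

theorem mem_gPow_iff {u : Kz ⊗[ℂ] L} : u ∈ gPow L ↔ ∀ n < 0, coeffT L n u = 0 := by
  simp [gPow]

theorem tmul_mem_gPow {f : Kz} (hf : ∀ n < 0, f.coeff n = 0) (a : L) : f ⊗ₜ[ℂ] a ∈ gPow L :=
  mem_gPow_iff.2 fun n hn => by simp [hf n hn]

theorem coeff_equivFinsuppOfBasisRight {ι : Type*} [DecidableEq ι] (b : Module.Basis ι ℂ L)
    (u : Kz ⊗[ℂ] L) (i : ι) (n : ℤ) :
    (TensorProduct.equivFinsuppOfBasisRight b u i).coeff n = b.repr (coeffT L n u) i := by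
  rw [TensorProduct.equivFinsuppOfBasisRight_apply]
  induction u using TensorProduct.induction_on with
  | zero => simp
  | tmul f a => simp [mul_comm]
  | add x y hx hy => simp_all

theorem eq_zero_of_forall_coeffT_eq_zero {ι : Type*} (b : Module.Basis ι ℂ L)
    {u : Kz ⊗[ℂ] L} (h : ∀ n, coeffT L n u = 0) : u = 0 := by
  classical
  refine (TensorProduct.equivFinsuppOfBasisRight b).map_eq_zero_iff.1 (Finsupp.ext fun i => ?_)
  ext n
  simp [coeff_equivFinsuppOfBasisRight, h]

end Coefficients

section Pairing

variable (L) in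
/-- `KB` as a `ℂ`-bilinear map: `residuePairing L u v` is definitionally `KB L u v`. -/
def residuePairing : (Kz ⊗[ℂ] L) →ₗ[ℂ] (Kz ⊗[ℂ] L) →ₗ[ℂ] ℂ :=
  (((killingForm ℂ L).baseChange Kz).restrictScalars₁₂ ℂ ℂ).compr₂ (coeffL (-1))

theorem residuePairing_zm_tmul (u : Kz ⊗[ℂ] L) (j : ℤ) (a : L) :
    residuePairing L u (zm j ⊗ₜ[ℂ] a) = killingForm ℂ L (coeffT L (-1 - j) u) a := by
  induction u using TensorProduct.induction_on with
  | zero => simp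
  | tmul f b =>
    simp [residuePairing, coeffL, LinearMap.BilinForm.baseChange_tmul, coeff_mul_zm, mul_comm]
  | add x y hx hy => simp_all

end Pairing

theorem Module.Basis.tensorProduct_repr_comm {R M ι : Type*} [CommSemiring R] [AddCommMonoid M]
    [Module R M] (b : Module.Basis ι R M) (s : M ⊗[R] M) (i j : ι) :
    (b.tensorProduct b).repr (TensorProduct.comm R M M s) (i, j)
      = (b.tensorProduct b).repr s (j, i) := by
  induction s using TensorProduct.induction_on with
  | zero => simp
  | tmul m n => simp [mul_comm]
  | add x y hx hy => simp_all

theorem exists_support_bound {ι V : Type*} [Fintype ι] [Zero V] {t : ℕ}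
    {P : ℕ → ι → ℕ →₀ V} (hPtop : ∀ k l, t < k → P k l = 0) :
    ∃ M, t < M ∧ ∀ k l m, M ≤ m → P k l m = 0 := by
  classical
  obtain ⟨M, hM⟩ := Finset.exists_nat_subset_range
    (range (t + 1) ∪ (range (t + 1) ×ˢ univ).biUnion fun p : ℕ × ι => (P p.1 p.2).support)
  have htM : t < M := mem_range.1 (hM (by simp))
  refine ⟨M, htM, fun k l m hm => ?_⟩
  by_cases hk : t < k
  · simp [hPtop k l hk]
  · by_contra hP
    have : m < M := mem_range.1 (hM (by simpa using Or.inr ⟨k, by omega, l, hP⟩))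
    omega

section Skew

variable {d t : ℕ} {e : Module.Basis (Fin d) ℂ L} {P : ℕ → Fin d → ℕ →₀ L}

theorem tensorProduct_repr_casimir (a b : Fin d) :
    (e.tensorProduct e).repr (∑ l : Fin d, e l ⊗ₜ[ℂ] e l) (a, b) = if a = b then 1 else 0 := by
  simp [Finsupp.single_apply]

theorem repr_vFun_eq_sum (hPtop : ∀ k l, t < k → P k l = 0) {M : ℕ} (htM : t < M)
    (hM : ∀ k l m, M ≤ m → P k l m = 0)
    (a b : Fin d) (x y : ℂ) :
    (e.tensorProduct e).repr (vFun t e P x y) (a, b)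
      = ∑ k ∈ range M, ∑ m ∈ range M, e.repr (P k b m) a * x ^ k * y ^ m := by
  have hsupp : ∀ k, (P k b).support ⊆ range M := fun k m hm =>
    mem_range.2 (by_contra fun h => Finsupp.mem_support_iff.1 hm (hM k b m (by omega)))
  have hext : range (t + 1) ⊆ range M := range_subset_range.2 htM
  simp only [vFun, map_sum, Finsupp.coe_finsetSum, Finset.sum_apply,
    Module.Basis.tensorProduct_repr_tmul_apply, map_smul, Finsupp.smul_apply,
    Module.Basis.repr_self, Finsupp.single_apply, smul_eq_mul]
  simp only [mul_ite, ite_mul, mul_one, mul_zero, zero_mul, Finset.sum_ite_eq', mem_univ, if_true]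
  simp only [Finsupp.sum, map_sum, Finsupp.coe_finsetSum, Finset.sum_apply, map_smul,
    Finsupp.smul_apply, smul_eq_mul, Finset.mul_sum]
  rw [Finset.sum_subset hext fun k _ hk => by simp [hPtop k b (by simpa using hk)]]
  refine Finset.sum_congr rfl fun k _ => ?_
  rw [Finset.sum_subset (hsupp k) fun m _ hm => by simp [Finsupp.notMem_support_iff.1 hm]]
  exact Finset.sum_congr rfl fun m _ => by ring

theorem repr_coeff_antisymm (hPtop : ∀ k l, t < k → P k l = 0)
    (hskew : ∀ x y : ℂ, x ≠ y → rFun t e P x y = -(TensorProduct.comm ℂ L L (rFun t e P y x)))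
    (a b : Fin d) (k m : ℕ) : e.repr (P k b m) a = -e.repr (P m a k) b := by
  obtain ⟨M, htM, hM⟩ := exists_support_bound hPtop
  have hvanish : ∀ x y : ℂ, x ≠ y → ∑ k ∈ range M, ∑ m ∈ range M,
      (e.repr (P k b m) a + e.repr (P m a k) b) * x ^ k * y ^ m = 0 := by
    intro x y hxy
    have h := congrArg (fun s => (e.tensorProduct e).repr s (a, b)) (hskew x y hxy)
    simp only [rFun, map_add, map_smul, map_neg, Finsupp.add_apply, Finsupp.smul_apply,
      Finsupp.neg_apply, Module.Basis.tensorProduct_repr_comm, tensorProduct_repr_casimir,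
      repr_vFun_eq_sum hPtop htM hM, smul_eq_mul] at h
    have hswap : ∑ k ∈ range M, ∑ m ∈ range M, e.repr (P k a m) b * y ^ k * x ^ m
        = ∑ k ∈ range M, ∑ m ∈ range M, e.repr (P m a k) b * x ^ k * y ^ m := by
      rw [Finset.sum_comm]
      exact Finset.sum_congr rfl fun _ _ => Finset.sum_congr rfl fun _ _ => by ring
    rw [hswap] at h
    have hinv : (x - y)⁻¹ = -(y - x)⁻¹ := by rw [← neg_sub, inv_neg]
    simp only [add_mul, Finset.sum_add_distrib]
    have hδ : (if b = a then (1 : ℂ) else 0) = if a = b then 1 else 0 := by simp [eq_comm]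
    rw [hinv, hδ] at h
    linear_combination h
  by_cases hk : k < M
  · by_cases hm : m < M
    · exact eq_neg_of_add_eq_zero_left
        (coeff_eq_zero_of_sum_mul_pow_mul_pow_eq_zero hvanish hk hm)
    · simp [hM k b m (by omega), hPtop m a (by omega)]
  · simp [hPtop k b (by omega), hM m a k (by omega)]

end Skew

theorem setOf_forall_eq_zero_eq_of_isotropic {R M : Type*} [CommSemiring R] [AddCommMonoid M]
    [Module R M] (B : M →ₗ[R] M →ₗ[R] R) {W U : Submodule R M}
    (hW : ∀ w ∈ W, ∀ w' ∈ W, B w w' = 0) (hWU : W ⊔ U = ⊤)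
    (hU : ∀ g ∈ U, (∀ w ∈ W, B g w = 0) → g = 0) :
    {u | ∀ w ∈ W, B u w = 0} = (W : Set M) := by
  ext u
  refine ⟨fun hu => ?_, fun hu w hw => hW u hu w hw⟩
  obtain ⟨w, hw, g, hg, rfl⟩ := Submodule.mem_sup.1 (hWU ▸ Submodule.mem_top : u ∈ W ⊔ U)
  have hg0 : g = 0 := hU g hg fun w' hw' => by
    simpa [hW w hw w' hw'] using hu w' hw'
  simpa [hg0] using hw

section Generators

variable {d : ℕ} (e : Fin d → L) (P : ℕ → Fin d → ℕ →₀ L) (k : ℕ) (l : Fin d)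

theorem coeffT_fEl_natCast (m : ℕ) : coeffT L m (fEl e P k l) = P k l m := by
  simp only [fEl, Finsupp.sum, map_add, coeffT_tmul, zm_coeff, ite_smul, one_smul, zero_smul,
    map_sum, Nat.cast_inj, sum_ite_eq, Finsupp.mem_support_iff, ne_eq, Finsupp.if_mem_support,
    add_eq_right, ite_eq_right_iff]
  omega

theorem coeffT_fEl_of_neg {n : ℤ} (hn : n < 0) :
    coeffT L n (fEl e P k l) = if n = -(k : ℤ) - 1 then e l else 0 := by
  simp only [fEl, Finsupp.sum, map_add, map_sum, coeffT_tmul, zm_coeff, ite_smul, one_smul,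
    zero_smul, add_eq_left]
  exact Finset.sum_eq_zero fun m _ => if_neg (by omega)

theorem zm_tmul_sub_fEl_mem_gPow : zm (-(k : ℤ) - 1) ⊗ₜ[ℂ] e l - fEl e P k l ∈ gPow L :=
  mem_gPow_iff.2 fun n hn => by simp [coeffT_fEl_of_neg e P k l hn, zm_coeff]

end Generators

section Lagrangian

variable {d t : ℕ} {e : Module.Basis (Fin d) ℂ L} {P : ℕ → Fin d → ℕ →₀ L}

theorem killingForm_apply_basis
    (horth : ∀ i j, killingForm ℂ L (e i) (e j) = if i = j then 1 else 0)
    (v : L) (l : Fin d) : killingForm ℂ L v (e l) = e.repr v l := by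
  have : (killingForm ℂ L).flip (e l) = e.coord l :=
    e.ext fun j => by simp [horth, Finsupp.single_apply]
  exact LinearMap.congr_fun this v

theorem residuePairing_fEl
    (horth : ∀ i j, killingForm ℂ L (e i) (e j) = if i = j then 1 else 0)
    (u : Kz ⊗[ℂ] L) (k : ℕ) (l : Fin d) :
    residuePairing L u (fEl e P k l)
      = e.repr (coeffT L k u) l
        + (P k l).sum fun m p => killingForm ℂ L (coeffT L (-1 - m) u) p := by
  have hk : (-1 : ℤ) - (-(k : ℤ) - 1) = k := by ring
  simp [fEl, Finsupp.sum, residuePairing_zm_tmul, killingForm_apply_basis horth, hk]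

theorem residuePairing_fEl_fEl
    (horth : ∀ i j, killingForm ℂ L (e i) (e j) = if i = j then 1 else 0)
    (hPtop : ∀ k l, t < k → P k l = 0)
    (hskew : ∀ x y : ℂ, x ≠ y → rFun t e P x y = -(TensorProduct.comm ℂ L L (rFun t e P y x)))
    (k k' : ℕ) (l l' : Fin d) :
    residuePairing L (fEl e P k l) (fEl e P k' l') = 0 := by
  rw [residuePairing_fEl horth, coeffT_fEl_natCast, Finsupp.sum_eq_single k]
  · rw [coeffT_fEl_of_neg _ _ _ _ (by omega), if_pos (by ring), LieModule.traceForm_comm,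
      killingForm_apply_basis horth, repr_coeff_antisymm hPtop hskew, neg_add_cancel]
  · intro m _ hmk
    rw [coeffT_fEl_of_neg _ _ _ _ (by omega), if_neg (by omega), map_zero, LinearMap.zero_apply]
  · simp

theorem Wsub_isotropic (horth : ∀ i j, killingForm ℂ L (e i) (e j) = if i = j then 1 else 0)
    (hPtop : ∀ k l, t < k → P k l = 0)
    (hskew : ∀ x y : ℂ, x ≠ y → rFun t e P x y = -(TensorProduct.comm ℂ L L (rFun t e P y x))) :
    ∀ w ∈ Wsub e P, ∀ w' ∈ Wsub e P, residuePairing L w w' = 0 := by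
  intro w hw w' hw'
  have hbot : Submodule.map₂ (residuePairing L) (Wsub e P) (Wsub e P) = ⊥ := by
    rw [Wsub, Submodule.map₂_span_span, Submodule.span_eq_bot]
    rintro _ ⟨_, ⟨k, l, rfl⟩, _, ⟨k', l', rfl⟩, rfl⟩
    exact residuePairing_fEl_fEl horth hPtop hskew k k' l l'
  simpa [hbot] using Submodule.apply_mem_map₂ (residuePairing L) hw hw'

variable (e P) in
theorem Wsub_sup_gPow_eq_top : Wsub e P ⊔ gPow L = ⊤ := by
  set S := Wsub e P ⊔ gPow L
  have hzm : ∀ n < 0, ∀ a : L, zm n ⊗ₜ[ℂ] a ∈ S := by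
    intro n hn a
    obtain ⟨k, rfl⟩ : ∃ k : ℕ, n = -(k : ℤ) - 1 := ⟨(-n - 1).toNat, by omega⟩
    -- `sub_mem` does not apply to submodules of `Kz ⊗[ℂ] L` (an instance diamond between its
    -- additive group and the monoid underlying `Submodule`), so the difference is taken outside.
    have hbasis : Set.range e ⊆ S.comap (TensorProduct.mk ℂ Kz L (zm (-(k : ℤ) - 1))) := by
      rintro _ ⟨l, rfl⟩
      exact Submodule.mem_sup.2 ⟨_, Submodule.subset_span ⟨k, l, rfl⟩, _,
        zm_tmul_sub_fEl_mem_gPow e P k l, add_sub_cancel _ _⟩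
    exact Submodule.span_le.2 hbasis (e.span_eq ▸ Submodule.mem_top)
  have htmul : ∀ (f : Kz) (a : L), f ⊗ₜ[ℂ] a ∈ S := by
    intro f a
    have htop := Kz.submodule_eq_top_of_zm_mem (S := S.comap ((TensorProduct.mk ℂ Kz L).flip a))
      (fun n hn => hzm n hn a) (fun f hf => Submodule.mem_sup_right (tmul_mem_gPow hf a))
    have hf : f ∈ S.comap ((TensorProduct.mk ℂ Kz L).flip a) := htop ▸ Submodule.mem_top
    simpa using hf
  rw [eq_top_iff, ← TensorProduct.span_tmul_eq_top, Submodule.span_le]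
  rintro _ ⟨f, a, rfl⟩
  exact htmul f a

theorem eq_zero_of_mem_gPow_of_residuePairing_fEl
    (horth : ∀ i j, killingForm ℂ L (e i) (e j) = if i = j then 1 else 0)
    {g : Kz ⊗[ℂ] L} (hg : g ∈ gPow L) (h : ∀ k l, residuePairing L g (fEl e P k l) = 0) :
    g = 0 := by
  refine eq_zero_of_forall_coeffT_eq_zero e fun n => ?_
  rcases lt_or_ge n 0 with hn | hn
  · exact mem_gPow_iff.1 hg n hn
  · lift n to ℕ using hn
    refine e.repr.injective (Finsupp.ext fun l => ?_)
    have hpoly : ∀ m : ℕ, coeffT L (-1 - m) g = 0 := fun m => mem_gPow_iff.1 hg _ (by omega)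
    simpa [residuePairing_fEl horth, hpoly] using h n l

end Lagrangian

theorem statement10_general
    (L : Type*) [LieRing L] [LieAlgebra ℂ L]
    (d t : ℕ) (e : Module.Basis (Fin d) ℂ L)
    (horth : ∀ i j, killingForm ℂ L (e i) (e j) = if i = j then 1 else 0)
    (P : ℕ → Fin d → ℕ →₀ L)
    (hPtop : ∀ k l, t < k → P k l = 0)
    (hskew : ∀ x y : ℂ, x ≠ y →
      rFun t ⇑e P x y = - (TensorProduct.comm ℂ L L (rFun t ⇑e P y x)))
    :
    {u : Kz ⊗[ℂ] L | ∀ w ∈ Wsub ⇑e P, KB L u w = 0}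
      = (Wsub ⇑e P : Set (Kz ⊗[ℂ] L)) :=
  setOf_forall_eq_zero_eq_of_isotropic (residuePairing L) (Wsub_isotropic horth hPtop hskew)
    (Wsub_sup_gPow_eq_top e P) fun _ hg hgW =>
      eq_zero_of_mem_gPow_of_residuePairing_fEl horth hg fun k l =>
        hgW _ (Submodule.subset_span ⟨k, l, rfl⟩)

/-- With the notation and hypotheses of the rational-solution setup, the
subspace `W ⊆ 𝔤((z))` is Lagrangian with respect to the residue pairing `κ̄`: `W^⊥ = W`. -/
theorem statement10
    (L : Type*) [LieRing L] [LieAlgebra ℂ L]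
    [Module.Finite ℂ L] [LieAlgebra.IsSimple ℂ L]
    (d t : ℕ) (e : Module.Basis (Fin d) ℂ L)
    (horth : ∀ i j, killingForm ℂ L (e i) (e j) = if i = j then 1 else 0)
    (P : ℕ → Fin d → ℕ →₀ L)
    (hPtop : ∀ k l, t < k → P k l = 0)
    (hPdeg : t ≠ 0 → ∃ l, P t l ≠ 0)
    (B1213 B1223 B1323 :
      (L ⊗[ℂ] L) →ₗ[ℂ] (L ⊗[ℂ] L) →ₗ[ℂ] (L ⊗[ℂ] (L ⊗[ℂ] L)))
    (hB1213 : ∀ a b c dd : L,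
      B1213 (a ⊗ₜ[ℂ] b) (c ⊗ₜ[ℂ] dd) = ⁅a, c⁆ ⊗ₜ[ℂ] (b ⊗ₜ[ℂ] dd))
    (hB1223 : ∀ a b c dd : L,
      B1223 (a ⊗ₜ[ℂ] b) (c ⊗ₜ[ℂ] dd) = a ⊗ₜ[ℂ] (⁅b, c⁆ ⊗ₜ[ℂ] dd))
    (hB1323 : ∀ a b c dd : L,
      B1323 (a ⊗ₜ[ℂ] b) (c ⊗ₜ[ℂ] dd) = a ⊗ₜ[ℂ] (c ⊗ₜ[ℂ] ⁅b, dd⁆))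
    (hskew : ∀ x y : ℂ, x ≠ y →
      rFun t ⇑e P x y = - (TensorProduct.comm ℂ L L (rFun t ⇑e P y x)))
    (hCYBE : ∀ x₁ x₂ x₃ : ℂ, x₁ ≠ x₂ → x₁ ≠ x₃ → x₂ ≠ x₃ →
      B1213 (rFun t ⇑e P x₁ x₂) (rFun t ⇑e P x₁ x₃)
        + B1223 (rFun t ⇑e P x₁ x₂) (rFun t ⇑e P x₂ x₃)
        + B1323 (rFun t ⇑e P x₁ x₃) (rFun t ⇑e P x₂ x₃) = 0)
    :
    {u : Kz ⊗[ℂ] L | ∀ w ∈ Wsub ⇑e P, KB L u w = 0}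
      = (Wsub ⇑e P : Set (Kz ⊗[ℂ] L)) :=
  statement10_general L d t e horth P hPtop hskew

end
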